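/- Let κ be an infinite cardinal and let G be a completely metrizable topological group of weight ≤ κ. If for every ordinal γ < κ⁺ there exists a set S_γ ⊆ G of Cantor–Bendixson rank ≥ γ generating a CA-subgroup of G, then G has a perfectly generated CA-subgroup, i.e. there exists a perfect set P ⊆ G such that the subgroup generated by P is a CA-group. -/

import Mathlib

open Set Filter Cardinal FirstOrder

universe u v

/-- A topological space is completely metrizable if its topology is induced by a complete metric. -/
def CompletelyMetrizable (Y : Type*) [t : TopologicalSpace Y] : Prop :=
  ∃ m : MetricSpace Y, m.toUniformSpace.toTopologicalSpace = t ∧ @CompleteSpace Y m.toUniformSpace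

/-- The weight of a topological space: the least cardinality of a topological basis. -/
noncomputable def topWeight (X : Type u) [TopologicalSpace X] : Cardinal.{u} :=
  ⨅ B : { B : Set (Set X) // TopologicalSpace.IsTopologicalBasis B }, Cardinal.mk B.1

/-- A set is dense-in-itself if it is nonempty and has no isolated points
(in the subspace topology). -/
def DenseInItselfSet {X : Type*} [TopologicalSpace X] (S : Set X) : Prop :=
  S.Nonempty ∧ ∀ x ∈ S, AccPt x (𝓟 S)

/-- A set is perfect if it is nonempty, completely metrizable in the subspace topology,
and has no isolated points. -/
def IsPerfectSet {X : Type*} [TopologicalSpace X] (P : Set X) : Prop :=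
  P.Nonempty ∧ CompletelyMetrizable P ∧ ∀ x ∈ P, AccPt x (𝓟 P)

/-- The `γ`-th Cantor–Bendixson derivative of a set: iterate the operation of removing
isolated points, taking intersections at limit stages. -/
noncomputable def cbDeriv {X : Type u} [TopologicalSpace X] (A : Set X) (γ : Ordinal.{v}) :
    Set X :=
  Ordinal.limitRecOn γ A (fun _ ih => { x ∈ ih | AccPt x (𝓟 ih) })
    (fun o _ ih => ⋂ (o' : Ordinal.{v}) (h : o' < o), ih o' h)

/-- A group is a CA-group if the centralizer of every nonidentity element is abelian. -/
def IsCAGroup (H : Type*) [Group H] : Prop :=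
  ∀ h : H, h ≠ 1 → ∀ a ∈ Subgroup.centralizer ({h} : Set H),
    ∀ b ∈ Subgroup.centralizer ({h} : Set H), a * b = b * a

/-!
Some point of `S` is not isolated, so no point of the subgroup `H = ⟨S⟩` is isolated. Inside `H`
one then builds a Cantor scheme of balls: at level `n` every ball is split into two disjoint
smaller ones around nearby points of `H`, and the centres are moved so that every word `v` of
length `≤ n` in the level-`n` balls is decided, i.e. either `v ≠ 1` for every choice of points of
the closed balls, or `v = 1` for every choice of points of `H` in the open balls. The limit map of
the scheme is a continuous injection of the Cantor space, so its range `P` is perfect. A word in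
finitely many points of `P` is separated at some level and is eventually decided there, so it is
trivial iff it is trivial at the approximating centres from some stage on; this carries the
CA-implication `h ≠ 1, [h, a] = 1, [h, b] = 1 ⟹ [a, b] = 1` from `H` to `⟨P⟩`.
-/

open Topology Metric Function
open scoped commutatorElement

theorem isCAGroup_iff {K : Type*} [Group K] :
    IsCAGroup K ↔ ∀ h a b : K, h ≠ 1 → Commute h a → Commute h b → Commute a b := by
  simp only [IsCAGroup, Subgroup.mem_centralizer_singleton_iff]
  exact ⟨fun hK h a b hh ha hb => hK h hh a ha.eq.symm b hb.eq.symm,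
    fun hK h hh a ha b hb => (hK h a b hh ha.symm hb.symm).eq⟩

theorem Subgroup.isCAGroup_iff {G : Type*} [Group G] {K : Subgroup G} :
    IsCAGroup K ↔ ∀ h ∈ K, ∀ a ∈ K, ∀ b ∈ K, h ≠ 1 → Commute h a → Commute h b → Commute a b := by
  simp only [_root_.isCAGroup_iff, Subtype.forall, ne_eq, Subgroup.mk_eq_one,
    ← Submonoid.commute_coe_coe]

theorem Subgroup.exists_finset_of_mem_closure {G : Type*} [Group G] {s : Set G} {g : G}
    (hg : g ∈ closure s) : ∃ t : Finset G, ↑t ⊆ s ∧ g ∈ closure (t : Set G) := by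
  classical
  induction hg using closure_induction with
  | mem x hx => exact ⟨{x}, by simpa using hx, subset_closure (by simp)⟩
  | one => exact ⟨∅, by simp, one_mem _⟩
  | mul x y _ _ hx hy =>
    obtain ⟨t, hts, hxt⟩ := hx
    obtain ⟨t', hts', hyt'⟩ := hy
    refine ⟨t ∪ t', by simpa using ⟨hts, hts'⟩, mul_mem ?_ ?_⟩
    · exact closure_mono (by simp) hxt
    · exact closure_mono (by simp) hyt'
  | inv x _ hx =>
    obtain ⟨t, hts, hxt⟩ := hx
    exact ⟨t, hts, inv_mem hxt⟩

theorem Subgroup.accPt_of_accPt {G : Type*} [Group G] [TopologicalSpace G] [IsTopologicalGroup G]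
    (H : Subgroup G) {x y : G} (hx : x ∈ H) (hy : y ∈ H) (hacc : AccPt x (𝓟 (H : Set G))) :
    AccPt y (𝓟 (H : Set G)) := by
  rw [accPt_iff_frequently] at hacc ⊢
  have hnhds : 𝓝 y = Filter.map (y * x⁻¹ * ·) (𝓝 x) := by
    rw [map_mul_left_nhds, inv_mul_cancel_right]
  rw [hnhds, frequently_map]
  refine hacc.mono fun z ⟨hzx, hz⟩ => ⟨?_, mul_mem (mul_mem hy (inv_mem hx)) hz⟩
  simpa [mul_assoc, inv_mul_eq_iff_eq_mul] using hzx

theorem cbDeriv_one {X : Type*} [TopologicalSpace X] (A : Set X) :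
    cbDeriv A 1 = {x ∈ A | AccPt x (𝓟 A)} := by
  rw [← zero_add 1, cbDeriv, Ordinal.limitRecOn_add_one, Ordinal.limitRecOn_zero]

theorem IsCompact.completelyMetrizable {X : Type*} [MetricSpace X] {K : Set X} (hK : IsCompact K) :
    CompletelyMetrizable K :=
  ⟨inferInstance, rfl, hK.isComplete.completeSpace_coe⟩

theorem tendsto_update_not_atTop (b : ℕ → Bool) :
    Tendsto (fun n => update b n (!b n)) atTop (𝓝 b) :=
  tendsto_pi_nhds.2 fun j => tendsto_const_nhds.congr' <|
    (eventually_gt_atTop j).mono fun _ hn => (update_of_ne hn.ne _ _).symm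

theorem isPerfectSet_range {X : Type*} [MetricSpace X] {f : (ℕ → Bool) → X}
    (hf : Continuous f) (hinj : Injective f) : IsPerfectSet (range f) := by
  refine ⟨range_nonempty f, (isCompact_range hf).completelyMetrizable, ?_⟩
  rintro _ ⟨b, rfl⟩
  rw [accPt_iff_frequently]
  refine ((hf.tendsto b).comp (tendsto_update_not_atTop b)).frequently
    (Frequently.of_forall fun n => ⟨hinj.ne fun h => ?_, mem_range_self _⟩)
  simpa using congrFun h n

namespace FreeGroup

variable {ι κ G : Type*} [Group G]

theorem lift_mem {H : Subgroup G} {y : ι → G} (hy : ∀ i, y i ∈ H) (w : FreeGroup ι) :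
    lift y w ∈ H := by
  rw [← Subgroup.mem_comap]
  exact w.induction_on (one_mem _) (fun i => by simpa using hy i) (fun _ => inv_mem)
    (fun _ _ => mul_mem)

theorem lift_map (y : κ → G) (f : ι → κ) (w : FreeGroup ι) : lift y (map f w) = lift (y ∘ f) w := by
  induction w <;> simp_all

theorem lift_commutatorElement_eq_one_iff (y : ι → G) (v w : FreeGroup ι) :
    lift y ⁅v, w⁆ = 1 ↔ Commute (lift y v) (lift y w) := by
  rw [map_commutatorElement, commutatorElement_eq_one_iff_commute]

theorem continuous_lift_apply [TopologicalSpace G] [IsTopologicalGroup G] (w : FreeGroup ι) :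
    Continuous fun y : ι → G => lift y w := by
  induction w with
  | C1 => simpa using continuous_const
  | of i => simpa using continuous_apply i
  | inv_of _ h => simp only [_root_.map_inv]; exact h.inv
  | mul _ _ hv hw => simp only [_root_.map_mul]; exact hv.mul hw

noncomputable def wordsOfLengthLe (α : Type*) [Finite α] (n : ℕ) : Finset (FreeGroup α) :=
  ((List.finite_length_le (α × Bool) n).image mk).toFinset

theorem mk_mem_wordsOfLengthLe {α : Type*} [Finite α] {n : ℕ} {L : List (α × Bool)}
    (hL : L.length ≤ n) : mk L ∈ wordsOfLengthLe α n := by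
  simpa [wordsOfLengthLe] using ⟨L, hL, rfl⟩

end FreeGroup

def finPrefix (n : ℕ) (b : ℕ → Bool) : Fin n → Bool := fun i => b i

theorem finPrefix_eq_of_mem_cylinder {n : ℕ} {b b' : ℕ → Bool} (h : b' ∈ PiNat.cylinder b n) :
    finPrefix n b' = finPrefix n b :=
  funext fun i => h i i.isLt

theorem eventually_injective_finPrefix {ι : Type*} [Finite ι] {β : ι → ℕ → Bool}
    (hβ : Injective β) : ∀ᶠ n in atTop, Injective fun i => finPrefix n (β i) := by
  have hpair (i j : ι) : ∀ᶠ n in atTop, finPrefix n (β i) = finPrefix n (β j) → i = j := by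
    by_cases hij : i = j
    · exact Eventually.of_forall fun _ _ => hij
    obtain ⟨k, hk⟩ := Function.ne_iff.1 (hβ.ne hij)
    filter_upwards [eventually_gt_atTop k] with n hn h
    exact absurd (congrFun h ⟨k, hn⟩) hk
  filter_upwards [eventually_all.2 fun i => eventually_all.2 (hpair i)] with n hn i j h
  exact hn i j h

theorem Function.Injective.forall_extend {α β γ : Type*} {f : α → β} (hf : Injective f)
    {g : α → γ} {e : β → γ} {P : β → γ → Prop} (hg : ∀ a, P (f a) (g a)) (he : ∀ b, P b (e b))
    (b : β) : P b (extend f g e b) := by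
  by_cases hb : ∃ a, f a = b
  · obtain ⟨a, rfl⟩ := hb
    rw [hf.extend_apply]
    exact hg a
  · rw [extend_apply' _ _ _ hb]
    exact he b

open FreeGroup in
theorem commute_of_tendsto_of_generic {G ι : Type*} [Group G] [TopologicalSpace G] [T2Space G]
    [IsTopologicalGroup G] {H : Subgroup G}
    (hH : ∀ h ∈ H, ∀ a ∈ H, ∀ b ∈ H, h ≠ 1 → Commute h a → Commute h b → Commute a b)
    {u : ℕ → ι → G} {y : ι → G} (hu : Tendsto u atTop (𝓝 y)) (huH : ∀ m i, u m i ∈ H)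
    (hgen : ∀ w : FreeGroup ι, (∀ᶠ m in atTop, lift (u m) w = 1) ∨ lift y w ≠ 1)
    {wh wa wb : FreeGroup ι} (hh : lift y wh ≠ 1) (ha : Commute (lift y wh) (lift y wa))
    (hb : Commute (lift y wh) (lift y wb)) : Commute (lift y wa) (lift y wb) := by
  have hlim (w : FreeGroup ι) : Tendsto (fun m => lift (u m) w) atTop (𝓝 (lift y w)) :=
    ((continuous_lift_apply w).tendsto y).comp hu
  have eventually_commute {v w : FreeGroup ι} (hvw : Commute (lift y v) (lift y w)) :
      ∀ᶠ m in atTop, Commute (lift (u m) v) (lift (u m) w) := by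
    simp_rw [← lift_commutatorElement_eq_one_iff] at hvw ⊢
    exact (hgen _).resolve_right (not_not.2 hvw)
  have hh' : ∀ᶠ m in atTop, lift (u m) wh ≠ 1 := (hlim wh).eventually_ne hh
  have hab : ∀ᶠ m in atTop, lift (u m) ⁅wa, wb⁆ = 1 := by
    filter_upwards [hh', eventually_commute ha, eventually_commute hb] with m hm hma hmb
    rw [lift_commutatorElement_eq_one_iff]
    exact hH _ (lift_mem (huH m) _) _ (lift_mem (huH m) _) _ (lift_mem (huH m) _) hm hma hmb
  rw [← lift_commutatorElement_eq_one_iff]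
  exact tendsto_nhds_unique_of_eventuallyEq (hlim _) tendsto_const_nhds hab

section CantorScheme

variable {G : Type*} [Group G] [MetricSpace G]

structure BallLayer (H : Subgroup G) (n : ℕ) where
  center : (Fin n → Bool) → G
  radius : (Fin n → Bool) → ℝ
  center_mem : ∀ s, center s ∈ H
  radius_pos : ∀ s, 0 < radius s

namespace BallLayer

variable {H : Subgroup G} {n : ℕ}

def Refines (q p : BallLayer H n) : Prop :=
  ∀ s, dist (q.center s) (p.center s) + q.radius s ≤ p.radius s

theorem Refines.refl (p : BallLayer H n) : p.Refines p := fun s => by simp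

theorem Refines.trans {p q r : BallLayer H n} (hqp : q.Refines p) (hrq : r.Refines q) :
    r.Refines p := fun s => by
  linarith [hqp s, hrq s, dist_triangle (r.center s) (q.center s) (p.center s)]

theorem Refines.closedBall_subset {p q : BallLayer H n} (h : q.Refines p) (s : Fin n → Bool) :
    closedBall (q.center s) (q.radius s) ⊆ closedBall (p.center s) (p.radius s) :=
  closedBall_subset_closedBall' (by linarith [h s])

theorem Refines.ball_subset {p q : BallLayer H n} (h : q.Refines p) (s : Fin n → Bool) :
    ball (q.center s) (q.radius s) ⊆ ball (p.center s) (p.radius s) :=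
  ball_subset_ball' (by linarith [h s])

open FreeGroup

-- `ForcesNeOne` is stated for arbitrary points of the closed balls so that it applies to the limit
-- points, `ForcesEqOne` for points of `H` in the open balls so that it applies to later centres.
def ForcesNeOne (p : BallLayer H n) (v : FreeGroup (Fin n → Bool)) : Prop :=
  ∀ y : (Fin n → Bool) → G, (∀ s, y s ∈ closedBall (p.center s) (p.radius s)) → lift y v ≠ 1

def ForcesEqOne (p : BallLayer H n) (v : FreeGroup (Fin n → Bool)) : Prop :=
  ∀ y : (Fin n → Bool) → G, (∀ s, y s ∈ H ∧ y s ∈ ball (p.center s) (p.radius s)) → lift y v = 1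

def Decides (p : BallLayer H n) (v : FreeGroup (Fin n → Bool)) : Prop :=
  p.ForcesNeOne v ∨ p.ForcesEqOne v

theorem Refines.decides {p q : BallLayer H n} (h : q.Refines p) {v : FreeGroup (Fin n → Bool)}
    (hp : p.Decides v) : q.Decides v :=
  hp.imp (fun hne y hy => hne y fun s => h.closedBall_subset s (hy s))
    (fun heq y hy => heq y fun s => ⟨(hy s).1, h.ball_subset s (hy s).2⟩)

structure IsSplitOf (q : BallLayer H (n + 1)) (p : BallLayer H n) : Prop where
  nested : ∀ s, dist (q.center s) (p.center (Fin.init s)) + q.radius s ≤ p.radius (Fin.init s)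
  radius_le : ∀ s, q.radius s ≤ 2⁻¹ ^ (n + 1)
  disjoint : ∀ s s', Fin.init s = Fin.init s' → s ≠ s' →
    Disjoint (closedBall (q.center s) (q.radius s)) (closedBall (q.center s') (q.radius s'))

theorem IsSplitOf.of_refines {p : BallLayer H n} {q r : BallLayer H (n + 1)} (hq : q.IsSplitOf p)
    (hrq : r.Refines q) : r.IsSplitOf p where
  nested s := by
    linarith [hq.nested s, hrq s, dist_triangle (r.center s) (q.center s) (p.center (Fin.init s))]
  radius_le s := by
    linarith [hq.radius_le s, hrq s, dist_nonneg (x := r.center s) (y := q.center s)]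
  disjoint s s' hinit hne :=
    (hq.disjoint s s' hinit hne).mono (hrq.closedBall_subset s) (hrq.closedBall_subset s')

theorem exists_isSplitOf (hH : ∀ y ∈ H, AccPt y (𝓟 (H : Set G))) (p : BallLayer H n) :
    ∃ q : BallLayer H (n + 1), q.IsSplitOf p := by
  have hz (t : Fin n → Bool) : ∃ z ∈ H, z ≠ p.center t ∧ dist z (p.center t) < p.radius t / 4 := by
    obtain ⟨z, ⟨hzball, hzH⟩, hzne⟩ := accPt_iff_nhds.1 (hH _ (p.center_mem t)) _
      (ball_mem_nhds _ (div_pos (p.radius_pos t) four_pos))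
    exact ⟨z, hzH, hzne, hzball⟩
  choose z hzH hzne hzdist using hz
  have hδ (t : Fin n → Bool) : 0 < dist (z t) (p.center t) := dist_pos.2 (hzne t)
  set ρ : (Fin n → Bool) → ℝ := fun t =>
    min (min (dist (z t) (p.center t) / 3) (p.radius t / 4)) (2⁻¹ ^ (n + 1))
  have hρδ (t : Fin n → Bool) : ρ t ≤ dist (z t) (p.center t) / 3 :=
    (min_le_left _ _).trans (min_le_left _ _)
  have hρr (t : Fin n → Bool) : ρ t ≤ p.radius t / 4 := (min_le_left _ _).trans (min_le_right _ _)
  have hchildren (t : Fin n → Bool) :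
      Disjoint (closedBall (z t) (ρ t)) (closedBall (p.center t) (ρ t)) :=
    closedBall_disjoint_closedBall (by linarith [hρδ t, hδ t])
  refine ⟨⟨fun s => if s (Fin.last n) then z (Fin.init s) else p.center (Fin.init s),
    fun s => ρ (Fin.init s), fun s => ?_, fun s => lt_min (lt_min (by linarith [hδ (Fin.init s)])
      (by linarith [p.radius_pos (Fin.init s)])) (by positivity)⟩, ⟨fun s => ?_, fun s => ?_, ?_⟩⟩
  · split
    · exact hzH _
    · exact p.center_mem _
  · have := p.radius_pos (Fin.init s)
    dsimp only
    split
    · linarith [hzdist (Fin.init s), hρr (Fin.init s)]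
    · rw [dist_self]
      linarith [hρr (Fin.init s)]
  · exact min_le_right _ _
  · intro s s' hinit hne
    have hlast : s (Fin.last n) ≠ s' (Fin.last n) := fun h =>
      hne (by rw [← Fin.snoc_init_self s, ← Fin.snoc_init_self s', hinit, h])
    dsimp only
    rw [← hinit]
    cases hs : s (Fin.last n) <;> cases hs' : s' (Fin.last n) <;> simp only [hs, hs'] at hlast ⊢
    · exact absurd rfl hlast
    · exact (hchildren _).symm
    · exact hchildren _
    · exact absurd rfl hlast

variable [IsTopologicalGroup G]

theorem exists_refines_decides (p : BallLayer H n) (v : FreeGroup (Fin n → Bool)) :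
    ∃ q : BallLayer H n, q.Refines p ∧ q.Decides v := by
  by_cases hp : p.ForcesEqOne v
  · exact ⟨p, Refines.refl p, Or.inr hp⟩
  simp only [ForcesEqOne, not_forall] at hp
  obtain ⟨y, hy, hyv⟩ := hp
  have hopen : IsOpen {z : (Fin n → Bool) → G | lift z v ≠ 1} :=
    isOpen_ne_fun (continuous_lift_apply v) continuous_const
  obtain ⟨ε, hε, hball⟩ := Metric.isOpen_iff.1 hopen y hyv
  have hslack (s : Fin n → Bool) : 0 < p.radius s - dist (y s) (p.center s) :=
    sub_pos.2 (hy s).2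
  -- recentre at the witness `y`, inside the ball `ball y ε` on which `v` stays nontrivial
  refine ⟨⟨y, fun s => min (ε / 2) (p.radius s - dist (y s) (p.center s)), fun s => (hy s).1,
    fun s => lt_min (half_pos hε) (hslack s)⟩, fun s => ?_, Or.inl fun z hz => hball ?_⟩
  · linarith [min_le_right (ε / 2) (p.radius s - dist (y s) (p.center s))]
  · refine mem_ball.2 (lt_of_le_of_lt ((dist_pi_le_iff (half_pos hε).le).2 fun s => ?_)
      (half_lt_self hε))
    exact (mem_closedBall.1 (hz s)).trans (min_le_left _ _)

theorem exists_refines_decides_finset (p : BallLayer H n)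
    (T : Finset (FreeGroup (Fin n → Bool))) :
    ∃ q : BallLayer H n, q.Refines p ∧ ∀ v ∈ T, q.Decides v := by
  classical
  induction T using Finset.induction_on with
  | empty => exact ⟨p, Refines.refl p, by simp⟩
  | insert v T _ ih =>
    obtain ⟨q, hqp, hqT⟩ := ih
    obtain ⟨r, hrq, hrv⟩ := exists_refines_decides q v
    exact ⟨r, hqp.trans hrq, Finset.forall_mem_insert _ _ _ |>.2
      ⟨hrv, fun w hw => hrq.decides (hqT w hw)⟩⟩

end BallLayer

structure BallTower (H : Subgroup G) where
  layer : (n : ℕ) → BallLayer H n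
  radius_zero_le : ∀ s, (layer 0).radius s ≤ 1
  isSplitOf : ∀ n, (layer (n + 1)).IsSplitOf (layer n)
  decides : ∀ n, ∀ v ∈ FreeGroup.wordsOfLengthLe (Fin n → Bool) n, (layer n).Decides v

theorem exists_ballTower [IsTopologicalGroup G] {H : Subgroup G}
    (hH : ∀ y ∈ H, AccPt y (𝓟 (H : Set G))) : Nonempty (BallTower H) := by
  obtain ⟨p₀, hp₀, hp₀dec⟩ := BallLayer.exists_refines_decides_finset
    ⟨fun _ => 1, fun _ => 1, fun _ => one_mem H, fun _ => one_pos⟩ (FreeGroup.wordsOfLengthLe _ 0)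
  have hstep (n : ℕ) (p : BallLayer H n) : ∃ r : BallLayer H (n + 1),
      r.IsSplitOf p ∧ ∀ v ∈ FreeGroup.wordsOfLengthLe _ (n + 1), r.Decides v := by
    obtain ⟨q, hq⟩ := BallLayer.exists_isSplitOf hH p
    obtain ⟨r, hrq, hr⟩ := q.exists_refines_decides_finset (FreeGroup.wordsOfLengthLe _ (n + 1))
    exact ⟨r, hq.of_refines hrq, hr⟩
  choose next hnext_split hnext_dec using hstep
  refine ⟨⟨fun n => Nat.rec p₀ next n, fun s => ?_, fun n => hnext_split n _, ?_⟩⟩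
  · exact (by linarith [hp₀ s, dist_nonneg (x := p₀.center s) (y := 1)] : p₀.radius s ≤ 1)
  · rintro (_ | n)
    exacts [hp₀dec, hnext_dec n _]

namespace BallTower

variable {H : Subgroup G} (T : BallTower H)

def center (n : ℕ) (b : ℕ → Bool) : G := (T.layer n).center (finPrefix n b)

def radius (n : ℕ) (b : ℕ → Bool) : ℝ := (T.layer n).radius (finPrefix n b)

theorem center_mem (n : ℕ) (b : ℕ → Bool) : T.center n b ∈ H := (T.layer n).center_mem _

theorem radius_pos (n : ℕ) (b : ℕ → Bool) : 0 < T.radius n b := (T.layer n).radius_pos _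

theorem radius_le (n : ℕ) (b : ℕ → Bool) : T.radius n b ≤ 2⁻¹ ^ n := by
  cases n with
  | zero => exact (T.radius_zero_le _).trans_eq (pow_zero _).symm
  | succ n => exact (T.isSplitOf n).radius_le _

theorem dist_center_succ_add_radius_le (n : ℕ) (b : ℕ → Bool) :
    dist (T.center (n + 1) b) (T.center n b) + T.radius (n + 1) b ≤ T.radius n b :=
  (T.isSplitOf n).nested (finPrefix (n + 1) b)

theorem dist_center_add_radius_le {n m : ℕ} (hnm : n ≤ m) (b : ℕ → Bool) :
    dist (T.center m b) (T.center n b) + T.radius m b ≤ T.radius n b := by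
  induction m, hnm using Nat.le_induction with
  | base => simp
  | succ m _ ih =>
    linarith [T.dist_center_succ_add_radius_le m b,
      dist_triangle (T.center (m + 1) b) (T.center m b) (T.center n b)]

theorem center_mem_ball {n m : ℕ} (hnm : n ≤ m) (b : ℕ → Bool) :
    T.center m b ∈ ball (T.center n b) (T.radius n b) :=
  mem_ball.2 (by linarith [T.dist_center_add_radius_le hnm b, T.radius_pos m b])

theorem cauchySeq_center (b : ℕ → Bool) : CauchySeq fun n => T.center n b := by
  refine cauchySeq_of_le_geometric 2⁻¹ 1 (by norm_num) fun n => ?_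
  rw [dist_comm, one_mul]
  linarith [T.dist_center_succ_add_radius_le n b, T.radius_pos (n + 1) b, T.radius_le n b]

variable [CompleteSpace G]

noncomputable def limit (b : ℕ → Bool) : G := limUnder atTop fun n => T.center n b

theorem tendsto_center (b : ℕ → Bool) :
    Tendsto (fun n => T.center n b) atTop (𝓝 (T.limit b)) :=
  (T.cauchySeq_center b).tendsto_limUnder

theorem limit_mem_closedBall (n : ℕ) (b : ℕ → Bool) :
    T.limit b ∈ closedBall (T.center n b) (T.radius n b) :=
  isClosed_closedBall.mem_of_tendsto (T.tendsto_center b) <|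
    (eventually_ge_atTop n).mono fun _ hm => ball_subset_closedBall (T.center_mem_ball hm b)

theorem continuous_limit : Continuous T.limit := by
  refine continuous_iff_continuousAt.2 fun b => Metric.tendsto_nhds.2 fun ε hε => ?_
  obtain ⟨n, hn⟩ := exists_pow_lt_of_lt_one (half_pos hε) (by norm_num : (2⁻¹ : ℝ) < 1)
  filter_upwards [(PiNat.isOpen_cylinder _ b n).mem_nhds (PiNat.self_mem_cylinder b n)]
    with b' hb'
  have hcenter : T.center n b' = T.center n b := by
    rw [center, center, finPrefix_eq_of_mem_cylinder hb']
  have hradius : T.radius n b' = T.radius n b := by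
    rw [radius, radius, finPrefix_eq_of_mem_cylinder hb']
  have h := T.limit_mem_closedBall n b'
  rw [hcenter, hradius] at h
  linarith [dist_triangle_right (T.limit b') (T.limit b) (T.center n b), mem_closedBall.1 h,
    mem_closedBall.1 (T.limit_mem_closedBall n b), T.radius_le n b]

theorem injective_limit : Injective T.limit := by
  intro b b' h
  by_contra hne
  set n := PiNat.firstDiff b b'
  have hdisj := (T.isSplitOf n).disjoint (finPrefix (n + 1) b) (finPrefix (n + 1) b')
    (funext fun i => (PiNat.mem_cylinder_firstDiff b b' i i.isLt))
    (fun h' => PiNat.apply_firstDiff_ne hne (congrFun h' (Fin.last n)))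
  exact hdisj.ne_of_mem (T.limit_mem_closedBall (n + 1) b) (T.limit_mem_closedBall (n + 1) b') h

open FreeGroup in
theorem eventually_lift_center_eq_one_or_lift_limit_ne_one {ι : Type*} [Finite ι]
    {β : ι → ℕ → Bool} (hβ : Injective β) (w : FreeGroup ι) :
    (∀ᶠ m in atTop, lift (fun i => T.center m (β i)) w = 1) ∨
      lift (fun i => T.limit (β i)) w ≠ 1 := by
  classical
  obtain ⟨n, hinj, hlen⟩ : ∃ n, Injective (fun i => finPrefix n (β i)) ∧ w.toWord.length ≤ n :=
    ((eventually_injective_finPrefix hβ).and (eventually_ge_atTop _)).exists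
  set f := fun i => finPrefix n (β i)
  have hshort : map f w ∈ wordsOfLengthLe _ n := by
    rw [← mk_toWord (x := w), map.mk]
    exact mk_mem_wordsOfLengthLe (by simpa using hlen)
  -- `f` is injective, so every `g : ι → G` extends to a tuple indexed by the level-`n` cones
  have hlift (g : ι → G) : lift (extend f g (T.layer n).center) (map f w) = lift g w := by
    rw [lift_map, Function.extend_comp hinj]
  rcases T.decides n _ hshort with hne | heq
  · right
    rw [← hlift]
    exact hne _ (hinj.forall_extend (fun i => T.limit_mem_closedBall n (β i))
      fun s => mem_closedBall_self ((T.layer n).radius_pos s).le)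
  · left
    filter_upwards [eventually_ge_atTop n] with m hm
    rw [← hlift]
    exact heq _ (hinj.forall_extend
      (P := fun s y => y ∈ H ∧ y ∈ ball ((T.layer n).center s) ((T.layer n).radius s))
      (fun i => ⟨T.center_mem m (β i), T.center_mem_ball hm (β i)⟩)
      fun s => ⟨(T.layer n).center_mem s, mem_ball_self ((T.layer n).radius_pos s)⟩)

variable [IsTopologicalGroup G]

theorem isCAGroup_closure_range_limit (hCA : IsCAGroup H) :
    IsCAGroup (Subgroup.closure (range T.limit)) := by
  rw [Subgroup.isCAGroup_iff] at hCA ⊢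
  intro h hh a ha b hb hne hha hhb
  obtain ⟨t, hts, hht, hat, hbt⟩ : ∃ t : Finset G, ↑t ⊆ range T.limit ∧
      h ∈ Subgroup.closure (t : Set G) ∧ a ∈ Subgroup.closure (t : Set G) ∧
      b ∈ Subgroup.closure (t : Set G) := by
    classical
    obtain ⟨t₁, ht₁, hh₁⟩ := Subgroup.exists_finset_of_mem_closure hh
    obtain ⟨t₂, ht₂, ha₂⟩ := Subgroup.exists_finset_of_mem_closure ha
    obtain ⟨t₃, ht₃, hb₃⟩ := Subgroup.exists_finset_of_mem_closure hb
    refine ⟨t₁ ∪ t₂ ∪ t₃, by simp [ht₁, ht₂, ht₃], Subgroup.closure_mono ?_ hh₁,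
      Subgroup.closure_mono ?_ ha₂, Subgroup.closure_mono ?_ hb₃⟩ <;>
      simp [Set.subset_def] <;> tauto
  choose β hβ using fun p : (t : Set G) => hts p.2
  have hβinj : Injective β := fun p q hpq => Subtype.ext (by rw [← hβ p, ← hβ q, hpq])
  have hlimit : (fun p => T.limit (β p)) = Subtype.val := funext hβ
  rw [FreeGroup.closure_eq_range, ← hlimit] at hht hat hbt
  obtain ⟨wh, rfl⟩ := hht
  obtain ⟨wa, rfl⟩ := hat
  obtain ⟨wb, rfl⟩ := hbt
  exact commute_of_tendsto_of_generic hCA (tendsto_pi_nhds.2 fun p => T.tendsto_center (β p))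
    (fun m p => T.center_mem m (β p)) (T.eventually_lift_center_eq_one_or_lift_limit_ne_one hβinj)
    hne hha hhb

end BallTower

theorem exists_isPerfectSet_isCAGroup_closure [CompleteSpace G] [IsTopologicalGroup G]
    {H : Subgroup G} (hH : ∀ y ∈ H, AccPt y (𝓟 (H : Set G))) (hCA : IsCAGroup H) :
    ∃ P : Set G, IsPerfectSet P ∧ IsCAGroup (Subgroup.closure P) := by
  obtain ⟨T⟩ := exists_ballTower hH
  exact ⟨range T.limit, isPerfectSet_range T.continuous_limit T.injective_limit,
    T.isCAGroup_closure_range_limit hCA⟩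

end CantorScheme

theorem statement18_general (κ : Cardinal.{u}) (hκ : ℵ₀ ≤ κ)
    {G : Type u} [Group G] [TopologicalSpace G] [IsTopologicalGroup G]
    (hG : CompletelyMetrizable G)
    (h : ∀ γ : Ordinal.{u}, γ < (Order.succ κ).ord → ∃ S : Set G,
      (∀ γ' : Ordinal.{u}, γ' < γ → (cbDeriv S γ').Nonempty) ∧
      IsCAGroup ↥(Subgroup.closure S)) :
    ∃ P : Set G, IsPerfectSet P ∧ IsCAGroup ↥(Subgroup.closure P) := by
  obtain ⟨m, rfl, hcomplete⟩ := hG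
  let := m
  have htwo : (2 : Ordinal.{u}) < (Order.succ κ).ord :=
    (Ordinal.natCast_lt_omega0 2).trans_le (Cardinal.omega0_le_ord.2 (hκ.trans (Order.le_succ κ)))
  obtain ⟨S, hS, hCA⟩ := h 2 htwo
  obtain ⟨x₀, hx₀S, hx₀⟩ : {x ∈ S | AccPt x (𝓟 S)}.Nonempty := cbDeriv_one S ▸ hS 1 one_lt_two
  have hacc : AccPt x₀ (𝓟 (Subgroup.closure S : Set G)) :=
    hx₀.mono (principal_mono.2 Subgroup.subset_closure)
  exact exists_isPerfectSet_isCAGroup_closure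
    (fun y hy => (Subgroup.closure S).accPt_of_accPt (Subgroup.subset_closure hx₀S) hy hacc) hCA

theorem statement18 (κ : Cardinal.{u}) (hκ : ℵ₀ ≤ κ)
    {G : Type u} [Group G] [TopologicalSpace G] [IsTopologicalGroup G]
    (hG : CompletelyMetrizable G) (hw : topWeight G ≤ κ)
    (h : ∀ γ : Ordinal.{u}, γ < (Order.succ κ).ord → ∃ S : Set G,
      (∀ γ' : Ordinal.{u}, γ' < γ → (cbDeriv S γ').Nonempty) ∧
      IsCAGroup ↥(Subgroup.closure S)) :
    ∃ P : Set G, IsPerfectSet P ∧ IsCAGroup ↥(Subgroup.closure P) :=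
  statement18_general κ hκ hG h
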